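/- arXiv:2605.14599 — 2 statements merged into one kernel-verified Lean document; each statement's English description precedes it below -/
import Mathlib

section
/- Variance decomposition of the regularized return (Corollary variance_return_decomp): Let β ≥ 0, let r be a bounded measurable reward, and let π be a Markov policy (with kernels admitting ν-densities with bounded measurable log-densities when β > 0). Then the variance of the regularized return under the trajectory law P^π decomposes as Var_{τ∼P^π}( Σ_{t=1}^T ( r_t(s_t,a_t) − β log π_t(a_t|s_t) ) ) = Σ_{t=1}^T E^π[ (A^π_{t,r}(s_t,a_t))² ] + Σ_{t=0}^{T−1} E^π[ (δ^π_{t,r})² ], where δ^π_{t,r} := V^π_{t+1,r}(s_{t+1}) − (P_t V^π_{t+1,r})(s_t,a_t) for t ≥ 1 and δ^π_{0,r} := V^π_{1,r}(s₁) − ∫ V^π_{1,r} dP₀. -/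
open MeasureTheory ProbabilityTheory Real
open scoped ENNReal RealInnerProductSpace

noncomputable section

namespace IRL

variable {S A : Type*} [MeasurableSpace S] [MeasurableSpace A]

/-- A reward tuple `(r_t)` of bounded measurable functions. -/
def IsBddReward (r : ℕ → S → A → ℝ) : Prop :=
  ∀ t, Measurable (fun q : S × A => r t q.1 q.2) ∧ ∃ C, ∀ s a, |r t s a| ≤ C

/-- `p` is a family of `ν`-probability densities of a Markov policy. -/
def IsPolicyDensity (ν : Measure A) (p : ℕ → S → A → ℝ) : Prop :=
  (∀ t, Measurable (fun q : S × A => p t q.1 q.2)) ∧ (∀ t s a, 0 ≤ p t s a) ∧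
    (∀ t s, ∫ a, p t s a ∂ν = 1)

/-- the log-densities `log π_t` are bounded (in particular the densities are positive). -/
def HasBddLogDensity (p : ℕ → S → A → ℝ) : Prop :=
  ∀ t, (∀ s a, 0 < p t s a) ∧ ∃ C, ∀ s a, |Real.log (p t s a)| ≤ C

variable (T : ℕ) (P : ℕ → Kernel (S × A) S) (ν : Measure A)

/-- Soft-optimal value function `V*_{t,r}` (backward recursion, `V* t ≡ 0` for `t > T`). -/
def Vstar (β : ℝ) (r : ℕ → S → A → ℝ) (t : ℕ) (s : S) : ℝ :=
  if T < t then 0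
  else β * Real.log (∫ a, Real.exp ((r t s a + ∫ s', Vstar β r (t + 1) s' ∂(P t (s, a))) / β) ∂ν)
termination_by T + 1 - t
decreasing_by omega

/-- Soft-optimal state-action value `Q*_{t,r}`. -/
def Qstar (β : ℝ) (r : ℕ → S → A → ℝ) (t : ℕ) (s : S) (a : A) : ℝ :=
  r t s a + ∫ s', Vstar T P ν β r (t + 1) s' ∂(P t (s, a))

/-- `ν`-density of the soft-optimal policy `π*_r`. -/
def piStar (β : ℝ) (r : ℕ → S → A → ℝ) (t : ℕ) (s : S) (a : A) : ℝ :=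
  Real.exp ((Qstar T P ν β r t s a - Vstar T P ν β r t s) / β)

/-- Value function `V^π_{t,r}` of a policy given by densities `p` (with `β = 0` this is the
unregularized value function `V^{π,0}`). -/
def Vpol (β : ℝ) (p r : ℕ → S → A → ℝ) (t : ℕ) (s : S) : ℝ :=
  if T < t then 0
  else ∫ a,
    (r t s a + (∫ s', Vpol β p r (t + 1) s' ∂(P t (s, a))) - β * Real.log (p t s a)) * p t s a ∂ν
termination_by T + 1 - t
decreasing_by omega

/-- `Q^π_{t,r}` for a policy given by densities `p`. -/
def Qpol (β : ℝ) (p r : ℕ → S → A → ℝ) (t : ℕ) (s : S) (a : A) : ℝ :=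
  r t s a + ∫ s', Vpol T P ν β p r (t + 1) s' ∂(P t (s, a))

/-- Regularized advantage `A^π_{t,r}(s,a) = Q^π - V^π - β log π_t(a|s)`. -/
def Apol (β : ℝ) (p r : ℕ → S → A → ℝ) (t : ℕ) (s : S) (a : A) : ℝ :=
  Qpol T P ν β p r t s a - Vpol T P ν β p r t s - β * Real.log (p t s a)

variable (P0 : Measure S)

/-- Optimal value `J*(r) = ∫ V*_{1,r} dP₀`. -/
def Jstar (β : ℝ) (r : ℕ → S → A → ℝ) : ℝ := ∫ s, Vstar T P ν β r 1 s ∂P0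

/-- Expected (regularized) return `J(r,π)` of a density policy. -/
def Jpol (β : ℝ) (p r : ℕ → S → A → ℝ) : ℝ := ∫ s, Vpol T P ν β p r 1 s ∂P0

/-- Iterated expectation, from time `t` in state `s`, of a trajectory functional `g` under a
(kernel) Markov policy `π`; coordinates of the trajectory outside `{1,…,T}` are irrelevant
junk values. -/
def polExp [Nonempty S] [Nonempty A] (pol : ℕ → Kernel S A) (g : (ℕ → S × A) → ℝ) (t : ℕ)
    (s : S) : ℝ :=
  if T < t then g (fun _ => (Classical.arbitrary S, Classical.arbitrary A))
  else ∫ a, ∫ s', polExp pol (fun τ => g (Function.update τ t (s, a))) (t + 1) s' ∂(P t (s, a))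
    ∂(pol t s)
termination_by T + 1 - t
decreasing_by omega

/-- `μ` is the trajectory law `P^π` of the Markov policy `π` (with initial distribution `P₀`),
characterized through integrals of all bounded measurable trajectory functionals. -/
def IsTrajLaw [Nonempty S] [Nonempty A] (pol : ℕ → Kernel S A) (μ : Measure (ℕ → S × A)) : Prop :=
  IsProbabilityMeasure μ ∧
    ∀ g : (ℕ → S × A) → ℝ, Measurable g → (∃ C, ∀ τ, |g τ| ≤ C) →
      ∫ τ, g τ ∂μ = ∫ s, polExp T P pol g 1 s ∂P0

/-- The kernel `s ↦ p t s ⬝ ν` of a policy given by densities. -/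
def densKernel [IsFiniteMeasure ν] (p : ℕ → S → A → ℝ) (t : ℕ) : Kernel S A :=
  Kernel.withDensity (Kernel.const S ν) fun s a => ENNReal.ofReal (p t s a)

open Classical in
/-- Kullback–Leibler divergence `∫ log (dμ/dμ') dμ` if `μ ≪ μ'` (`∞` otherwise). -/
def KL {X : Type*} [MeasurableSpace X] (μ μ' : Measure X) : ℝ≥0∞ :=
  if μ ≪ μ' ∧ Integrable (fun x => Real.log (μ.rnDeriv μ' x).toReal) μ then
    ENNReal.ofReal (∫ x, Real.log (μ.rnDeriv μ' x).toReal ∂μ)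
  else ⊤

/-- Squared Hellinger distance, computed with the dominating measure `μ + μ'`. -/
def sqHellinger {X : Type*} [MeasurableSpace X] (μ μ' : Measure X) : ℝ :=
  ∫ x, (Real.sqrt ((μ.rnDeriv (μ + μ') x).toReal)
      - Real.sqrt ((μ'.rnDeriv (μ + μ') x).toReal)) ^ 2 ∂(μ + μ')

/-- Second directional derivative. -/
def D2 {E : Type*} [NormedAddCommGroup E] [NormedSpace ℝ E] (F : E → ℝ) (θ ξ ζ : E) : ℝ :=
  fderiv ℝ (fun x => fderiv ℝ F x ζ) θ ξ

/-- Third directional derivative. -/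
def D3 {E : Type*} [NormedAddCommGroup E] [NormedSpace ℝ E] (F : E → ℝ) (θ ξ ζ ω : E) : ℝ :=
  fderiv ℝ (fun x => D2 F x ζ ω) θ ξ

end IRL

/-!
The law of the trajectory from time `t` in state `s` is a Markov kernel, the iterated expectation
`polExp` is integration against it, and the trajectory law is its mixture over `s₁ ∼ P₀`.
With `c_t = r_t - β log π_t` and the tail return `R_t = Σ_{u ≥ t} c_u(s_u, a_u)`, one step gives
`R_t = c_t(s_t, a_t) + R_{t+1}`, so the Bellman recursion for `V^π` yields
`E[R_t | s_t = s] = V_t(s)`. Applying the law of total variance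
`E (f - c)² = (E f - c)² + E (f - E f)²` first over the trajectory after `s_{t+1}` and then over
`s_{t+1} ∼ P_t(s, a)`, and using `A_t = c_t + P_t V_{t+1} - V_t`, backward induction gives
`E[(R_t - V_t(s))² | s_t = s] = E[Σ_{u ≥ t} (A_u² + δ_u²) | s_t = s]`; a last application over
`s₁ ∼ P₀` adds the `δ_0` term.
-/

namespace IRL

section BddMeasurable

variable {X Y : Type*} [MeasurableSpace X] [MeasurableSpace Y]

def IsBddMeasurable (f : X → ℝ) : Prop :=
  Measurable f ∧ ∃ C, ∀ x, |f x| ≤ C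

namespace IsBddMeasurable

variable {f g : X → ℝ}

lemma const (c : ℝ) : IsBddMeasurable fun _ : X => c :=
  ⟨measurable_const, |c|, fun _ => le_rfl⟩

lemma add (hf : IsBddMeasurable f) (hg : IsBddMeasurable g) :
    IsBddMeasurable fun x => f x + g x := by
  obtain ⟨hfm, Cf, hCf⟩ := hf
  obtain ⟨hgm, Cg, hCg⟩ := hg
  exact ⟨hfm.add hgm, Cf + Cg, fun x => (abs_add_le _ _).trans (add_le_add (hCf x) (hCg x))⟩

lemma neg (hf : IsBddMeasurable f) : IsBddMeasurable fun x => -f x := by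
  obtain ⟨hfm, C, hC⟩ := hf
  exact ⟨hfm.neg, C, fun x => by simpa using hC x⟩

lemma sub (hf : IsBddMeasurable f) (hg : IsBddMeasurable g) :
    IsBddMeasurable fun x => f x - g x := by
  simpa only [sub_eq_add_neg] using hf.add hg.neg

lemma mul (hf : IsBddMeasurable f) (hg : IsBddMeasurable g) :
    IsBddMeasurable fun x => f x * g x := by
  obtain ⟨hfm, Cf, hCf⟩ := hf
  obtain ⟨hgm, Cg, hCg⟩ := hg
  refine ⟨hfm.mul hgm, Cf * Cg, fun x => ?_⟩
  rw [abs_mul]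
  exact mul_le_mul (hCf x) (hCg x) (abs_nonneg _) ((abs_nonneg _).trans (hCf x))

lemma pow (hf : IsBddMeasurable f) (n : ℕ) : IsBddMeasurable fun x => f x ^ n := by
  induction n with
  | zero => simpa using const 1
  | succ n ih => simpa only [pow_succ] using ih.mul hf

lemma comp (hf : IsBddMeasurable f) {φ : Y → X} (hφ : Measurable φ) :
    IsBddMeasurable (f ∘ φ) := by
  obtain ⟨hfm, C, hC⟩ := hf
  exact ⟨hfm.comp hφ, C, fun y => hC (φ y)⟩

lemma sum {ι : Type*} (s : Finset ι) {F : ι → X → ℝ} (hF : ∀ i ∈ s, IsBddMeasurable (F i)) :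
    IsBddMeasurable fun x => ∑ i ∈ s, F i x := by
  classical
  induction s using Finset.induction_on with
  | empty => simpa using const 0
  | insert i s hi ih =>
    simp only [Finset.sum_insert hi]
    exact (hF i (Finset.mem_insert_self i s)).add
      (ih fun j hj => hF j (Finset.mem_insert_of_mem hj))

lemma memLp (hf : IsBddMeasurable f) (p : ℝ≥0∞) (μ : Measure X) [IsFiniteMeasure μ] :
    MemLp f p μ := by
  obtain ⟨hfm, C, hC⟩ := hf
  exact .of_bound hfm.aestronglyMeasurable C (ae_of_all _ hC)

lemma integrable (hf : IsBddMeasurable f) (μ : Measure X) [IsFiniteMeasure μ] :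
    Integrable f μ :=
  (hf.memLp 1 μ).integrable le_rfl

lemma integral_kernel_prod {F : X × Y → ℝ} (hF : IsBddMeasurable F) (κ : Kernel X Y)
    [IsMarkovKernel κ] : IsBddMeasurable fun x => ∫ y, F (x, y) ∂κ x := by
  obtain ⟨hFm, C, hC⟩ := hF
  refine ⟨(hFm.stronglyMeasurable.integral_kernel_prod_right' (κ := κ)).measurable, C,
    fun x => ?_⟩
  simpa using norm_integral_le_of_norm_le_const (μ := κ x) (f := fun y => F (x, y))
    (ae_of_all _ fun y => hC (x, y))

lemma integral_kernel {F : Y → ℝ} (hF : IsBddMeasurable F) (κ : Kernel X Y) [IsMarkovKernel κ] :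
    IsBddMeasurable fun x => ∫ y, F y ∂κ x :=
  (hF.comp measurable_snd).integral_kernel_prod κ

end IsBddMeasurable

end BddMeasurable

lemma integral_sub_sq_eq_add {X : Type*} [MeasurableSpace X] {μ : Measure X}
    [IsProbabilityMeasure μ] {f : X → ℝ} (hf : MemLp f 2 μ) {m : ℝ} (hm : ∫ x, f x ∂μ = m)
    (c : ℝ) : ∫ x, (f x - c) ^ 2 ∂μ = (m - c) ^ 2 + ∫ x, (f x - m) ^ 2 ∂μ := by
  have hfi : Integrable f μ := hf.integrable one_le_two
  have hsq : Integrable (fun x => (f x - m) ^ 2) μ := (hf.sub (memLp_const m)).integrable_sq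
  have hlin : Integrable (fun x => 2 * (m - c) * (f x - m)) μ :=
    (hfi.sub (integrable_const m)).const_mul _
  calc ∫ x, (f x - c) ^ 2 ∂μ
      = ∫ x, ((m - c) ^ 2 + (2 * (m - c) * (f x - m) + (f x - m) ^ 2)) ∂μ := by
        congr 1; ext x; ring
    _ = (m - c) ^ 2 + ∫ x, (f x - m) ^ 2 ∂μ := by
        rw [integral_add (integrable_const _) ?_, integral_add hlin hsq,
          integral_const_mul, integral_sub hfi (integrable_const m), hm]
        · simp
        · exact hlin.add hsq

lemma integral_const_add {X : Type*} [MeasurableSpace X] {μ : Measure X}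
    [IsProbabilityMeasure μ] (c : ℝ) {f : X → ℝ} (hf : Integrable f μ) :
    ∫ x, c + f x ∂μ = c + ∫ x, f x ∂μ := by
  rw [integral_add (integrable_const c) hf, integral_const, probReal_univ, one_smul]

lemma sum_Icc_update {X : Type*} {t T : ℕ} (ht : t ≤ T) (F : ℕ → (ℕ → X) → ℝ) (τ : ℕ → X)
    (x : X) (hF : ∀ u, t < u → F u (Function.update τ t x) = F u τ) :
    ∑ u ∈ Finset.Icc t T, F u (Function.update τ t x)
      = F t (Function.update τ t x) + ∑ u ∈ Finset.Icc (t + 1) T, F u τ := by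
  rw [Finset.Icc_eq_cons_Ioc ht, Finset.sum_cons, ← Finset.Icc_add_one_left_eq_Ioc]
  exact congrArg _ (Finset.sum_congr rfl fun u hu => hF u (Finset.mem_Icc.1 hu).1)

section TrajKernel

variable {S A : Type*} [MeasurableSpace S] [MeasurableSpace A] [Nonempty S] [Nonempty A]
  (T : ℕ) (P : ℕ → Kernel (S × A) S) (pol : ℕ → Kernel S A)

/-- Law of the trajectory from time `t` on, started in state `s`: draw `a ∼ π_t(s)`,
`s' ∼ P_t(s, a)`, a trajectory `τ` from time `t + 1` started in `s'`, and write `(s, a)` into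
coordinate `t` of `τ`. Coordinates before `t` keep the junk value used by `polExp`. -/
def trajKernel (t : ℕ) : Kernel S (ℕ → S × A) :=
  if T < t then Kernel.const S (.dirac fun _ => (Classical.arbitrary S, Classical.arbitrary A))
  else Kernel.map (Kernel.id ×ₖ ((pol t ⊗ₖ P t) ⊗ₖ
      (trajKernel (t + 1)).comap (fun x => x.2.2) (measurable_snd.comp measurable_snd)))
    fun y => Function.update y.2.2 t (y.1, y.2.1.1)
termination_by T + 1 - t
decreasing_by omega

variable {T} {t : ℕ}

lemma trajKernel_of_lt (ht : T < t) :
    trajKernel T P pol t =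
      Kernel.const S (.dirac fun _ => (Classical.arbitrary S, Classical.arbitrary A)) := by
  rw [trajKernel, if_pos ht]

lemma trajKernel_of_le (ht : t ≤ T) :
    trajKernel T P pol t = Kernel.map (Kernel.id ×ₖ ((pol t ⊗ₖ P t) ⊗ₖ
      (trajKernel T P pol (t + 1)).comap (fun x => x.2.2) (measurable_snd.comp measurable_snd)))
      fun y => Function.update y.2.2 t (y.1, y.2.1.1) := by
  rw [trajKernel, if_neg (not_lt.2 ht)]

variable [∀ t, IsMarkovKernel (P t)] [∀ t, IsMarkovKernel (pol t)]

instance isMarkovKernel_trajKernel (t : ℕ) : IsMarkovKernel (trajKernel T P pol t) := by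
  by_cases ht : T < t
  · rw [trajKernel_of_lt P pol ht]
    infer_instance
  · have := isMarkovKernel_trajKernel (t + 1)
    rw [trajKernel_of_le P pol (not_lt.1 ht)]
    exact Kernel.IsMarkovKernel.map _ (by fun_prop)
termination_by T + 1 - t
decreasing_by omega

lemma integral_trajKernel_of_le (ht : t ≤ T) {f : (ℕ → S × A) → ℝ} (hf : IsBddMeasurable f)
    (s : S) :
    ∫ τ, f τ ∂trajKernel T P pol t s = ∫ a, ∫ s', ∫ τ, f (Function.update τ t (s, a))
      ∂trajKernel T P pol (t + 1) s' ∂P t (s, a) ∂pol t s := by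
  have hf' : IsBddMeasurable fun y : S × (A × S) × (ℕ → S × A) =>
      f (Function.update y.2.2 t (y.1, y.2.1.1)) := hf.comp (by fun_prop)
  have hg : IsBddMeasurable fun x : (A × S) × (ℕ → S × A) =>
      f (Function.update x.2 t (s, x.1.1)) := hf.comp (by fun_prop)
  rw [trajKernel_of_le P pol ht, Kernel.map_apply _ (by fun_prop),
    integral_map (by fun_prop) hf.1.aestronglyMeasurable, Kernel.prod_apply, Kernel.id_apply,
    Measure.dirac_prod, integral_map (by fun_prop) hf'.1.aestronglyMeasurable]
  dsimp only
  rw [integral_compProd (hg.integrable _), integral_compProd]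
  · rfl
  · exact (hg.integral_kernel_prod
      ((trajKernel T P pol (t + 1)).comap Prod.snd measurable_snd)).integrable _

theorem polExp_eq_integral {g : (ℕ → S × A) → ℝ} (hg : IsBddMeasurable g) (t : ℕ) (s : S) :
    polExp T P pol g t s = ∫ τ, g τ ∂trajKernel T P pol t s := by
  by_cases ht : T < t
  · rw [polExp, if_pos ht, trajKernel_of_lt P pol ht, Kernel.const_apply,
      integral_dirac' _ _ hg.1.stronglyMeasurable]
  · rw [polExp, if_neg ht, integral_trajKernel_of_le P pol (not_lt.1 ht) hg]
    refine integral_congr_ae (ae_of_all _ fun a => integral_congr_ae (ae_of_all _ fun s' => ?_))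
    exact polExp_eq_integral (hg.comp (by fun_prop)) (t + 1) s'
termination_by T + 1 - t
decreasing_by omega

variable {P pol} in
lemma IsTrajLaw.integral_eq {P0 : Measure S} {μ : Measure (ℕ → S × A)}
    (hμ : IsTrajLaw T P P0 pol μ) {g : (ℕ → S × A) → ℝ} (hg : IsBddMeasurable g) :
    ∫ τ, g τ ∂μ = ∫ s, ∫ τ, g τ ∂trajKernel T P pol 1 s ∂P0 := by
  rw [hμ.2 g hg.1 hg.2]
  exact integral_congr_ae (ae_of_all _ fun s => polExp_eq_integral P pol hg 1 s)

lemma map_trajKernel_state (ht : t ≤ T) (s : S) :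
    (trajKernel T P pol t s).map (fun τ => (τ t).1) = .dirac s := by
  rw [trajKernel_of_le P pol ht, Kernel.map_apply _ (by fun_prop),
    Measure.map_map (by fun_prop) (by fun_prop), Kernel.prod_apply, Kernel.id_apply]
  simp [Function.comp_def, Measure.map_fst_prod]

lemma integral_trajKernel_comp_state (ht : t ≤ T) {h : S → ℝ} (hh : Measurable h) (s : S) :
    ∫ τ, h (τ t).1 ∂trajKernel T P pol t s = h s := by
  have hstate : Measurable fun τ : ℕ → S × A => (τ t).1 := by fun_prop
  rw [← integral_map hstate.aemeasurable hh.aestronglyMeasurable, map_trajKernel_state P pol ht,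
    integral_dirac' _ _ hh.stronglyMeasurable]

end TrajKernel

section DensityPolicy

variable {S A : Type*} [MeasurableSpace S] [MeasurableSpace A] {ν : Measure A}
  {p : ℕ → S → A → ℝ}

lemma IsPolicyDensity.integrable (hp : IsPolicyDensity ν p) (t : ℕ) (s : S) :
    Integrable (p t s) ν := by
  by_contra h
  simpa [integral_undef h] using hp.2.2 t s

variable [IsFiniteMeasure ν]

lemma IsPolicyDensity.densKernel_apply (hp : IsPolicyDensity ν p) (t : ℕ) (s : S) :
    densKernel ν p t s = ν.withDensity fun a => ENNReal.ofReal (p t s a) := by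
  rw [densKernel, Kernel.withDensity_apply (f := fun s a => ENNReal.ofReal (p t s a)) _
    (ENNReal.measurable_ofReal.comp (hp.1 t)), Kernel.const_apply]

lemma IsPolicyDensity.integral_densKernel (hp : IsPolicyDensity ν p) (t : ℕ) (s : S)
    (f : A → ℝ) : ∫ a, f a ∂densKernel ν p t s = ∫ a, p t s a * f a ∂ν := by
  have hm : Measurable fun a => ENNReal.ofReal (p t s a) :=
    ENNReal.measurable_ofReal.comp ((hp.1 t).comp measurable_prodMk_left)
  rw [hp.densKernel_apply, integral_withDensity_eq_integral_toReal_smul hm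
    (ae_of_all _ fun _ => ENNReal.ofReal_lt_top)]
  simp [ENNReal.toReal_ofReal (hp.2.1 t s _)]

lemma IsPolicyDensity.isMarkovKernel_densKernel (hp : IsPolicyDensity ν p) (t : ℕ) :
    IsMarkovKernel (densKernel ν p t) := by
  refine ⟨fun s => ⟨?_⟩⟩
  rw [hp.densKernel_apply, withDensity_apply _ MeasurableSet.univ, setLIntegral_univ,
    ← ofReal_integral_eq_lintegral_ofReal (hp.integrable t s) (ae_of_all _ (hp.2.1 t s)),
    hp.2.2 t s, ENNReal.ofReal_one]

end DensityPolicy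

section Values

variable {S A : Type*} [MeasurableSpace S] [MeasurableSpace A]

def regReward (β : ℝ) (p r : ℕ → S → A → ℝ) (t : ℕ) (s : S) (a : A) : ℝ :=
  r t s a - β * Real.log (p t s a)

variable {T : ℕ} {P : ℕ → Kernel (S × A) S} {ν : Measure A} {β : ℝ}
  {p r : ℕ → S → A → ℝ} {t : ℕ}

lemma IsBddReward.isBddMeasurable_regReward (hr : IsBddReward r) (hp : IsPolicyDensity ν p)
    (hβ : 0 ≤ β) (hlog : 0 < β → HasBddLogDensity p) (t : ℕ) :
    IsBddMeasurable fun q : S × A => regReward β p r t q.1 q.2 := by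
  obtain ⟨hrm, Cr, hCr⟩ := hr t
  have hlogp : IsBddMeasurable fun q : S × A => β * Real.log (p t q.1 q.2) := by
    rcases hβ.eq_or_lt with rfl | hβ
    · simpa using IsBddMeasurable.const (X := S × A) 0
    obtain ⟨-, C, hC⟩ := hlog hβ t
    refine ⟨((hp.1 t).log).const_mul β, β * C, fun q => ?_⟩
    rw [abs_mul, abs_of_pos hβ]
    exact mul_le_mul_of_nonneg_left (hC q.1 q.2) hβ.le
  exact IsBddMeasurable.sub ⟨hrm, Cr, fun q => hCr q.1 q.2⟩ hlogp

variable (T P ν β p r)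

lemma Vpol_of_lt (ht : T < t) (s : S) : Vpol T P ν β p r t s = 0 := by
  rw [Vpol, if_pos ht]

variable {T P ν β p r}

lemma Vpol_of_le [IsFiniteMeasure ν] (hp : IsPolicyDensity ν p) (ht : t ≤ T) (s : S) :
    Vpol T P ν β p r t s = ∫ a, (regReward β p r t s a
      + ∫ s', Vpol T P ν β p r (t + 1) s' ∂P t (s, a)) ∂densKernel ν p t s := by
  rw [Vpol, if_neg (not_lt.2 ht), hp.integral_densKernel]
  congr 1
  ext a
  rw [regReward]
  ring

lemma Apol_eq (t : ℕ) (s : S) (a : A) :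
    Apol T P ν β p r t s a = regReward β p r t s a
      + ∫ s', Vpol T P ν β p r (t + 1) s' ∂P t (s, a) - Vpol T P ν β p r t s := by
  rw [Apol, Qpol, regReward]
  ring

variable [IsFiniteMeasure ν] [∀ t, IsMarkovKernel (P t)] (hp : IsPolicyDensity ν p)
  (hc : ∀ t, IsBddMeasurable fun q : S × A => regReward β p r t q.1 q.2)
include hp hc

theorem isBddMeasurable_Vpol (t : ℕ) : IsBddMeasurable (Vpol T P ν β p r t) := by
  by_cases ht : T < t
  · rw [funext (Vpol_of_lt T P ν β p r ht)]
    exact .const 0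
  · have := hp.isMarkovKernel_densKernel t
    have hnext := (isBddMeasurable_Vpol (t + 1)).integral_kernel (P t)
    rw [funext (Vpol_of_le hp (not_lt.1 ht))]
    exact ((hc t).add hnext).integral_kernel_prod (densKernel ν p t)
termination_by T + 1 - t
decreasing_by omega

lemma isBddMeasurable_integral_Vpol (t : ℕ) :
    IsBddMeasurable fun q : S × A => ∫ s', Vpol T P ν β p r (t + 1) s' ∂P t q :=
  (isBddMeasurable_Vpol hp hc (t + 1)).integral_kernel (P t)

lemma isBddMeasurable_Apol (t : ℕ) :
    IsBddMeasurable fun q : S × A => Apol T P ν β p r t q.1 q.2 := by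
  simp_rw [Apol_eq]
  exact ((hc t).add (isBddMeasurable_integral_Vpol hp hc t)).sub
    ((isBddMeasurable_Vpol hp hc t).comp measurable_fst)

end Values

section Return

variable {S A : Type*} (T : ℕ) (β : ℝ) (p r : ℕ → S → A → ℝ)

def tailReturn (t : ℕ) (τ : ℕ → S × A) : ℝ :=
  ∑ u ∈ Finset.Icc t T, regReward β p r u (τ u).1 (τ u).2

variable {T β p r} {t : ℕ}

lemma tailReturn_update (ht : t ≤ T) (τ : ℕ → S × A) (s : S) (a : A) :
    tailReturn T β p r t (Function.update τ t (s, a))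
      = regReward β p r t s a + tailReturn T β p r (t + 1) τ := by
  refine (sum_Icc_update ht (fun u τ => regReward β p r u (τ u).1 (τ u).2) τ (s, a)
    fun u hu => ?_).trans ?_
  · simp [Function.update_of_ne hu.ne']
  · simp [tailReturn]

end Return

section Increments

variable {S A : Type*} [MeasurableSpace S] [MeasurableSpace A]
  (T : ℕ) (P : ℕ → Kernel (S × A) S) (ν : Measure A) (β : ℝ) (p r : ℕ → S → A → ℝ)

/-- The paper's `δ^π_{t,r}` for `t ≥ 1`. -/
def transitionNoise (t : ℕ) (τ : ℕ → S × A) : ℝ :=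
  Vpol T P ν β p r (t + 1) (τ (t + 1)).1 - ∫ s', Vpol T P ν β p r (t + 1) s' ∂P t (τ t)

def sumSqIncrements (t : ℕ) (τ : ℕ → S × A) : ℝ :=
  ∑ u ∈ Finset.Icc t T,
    (Apol T P ν β p r u (τ u).1 (τ u).2 ^ 2 + transitionNoise T P ν β p r u τ ^ 2)

variable {T P ν β p r} {t : ℕ}

lemma sumSqIncrements_update (ht : t ≤ T) (τ : ℕ → S × A) (s : S) (a : A) :
    sumSqIncrements T P ν β p r t (Function.update τ t (s, a))
      = Apol T P ν β p r t s a ^ 2 + (Vpol T P ν β p r (t + 1) (τ (t + 1)).1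
          - ∫ s', Vpol T P ν β p r (t + 1) s' ∂P t (s, a)) ^ 2
        + sumSqIncrements T P ν β p r (t + 1) τ := by
  refine (sum_Icc_update ht (fun u τ => Apol T P ν β p r u (τ u).1 (τ u).2 ^ 2
    + transitionNoise T P ν β p r u τ ^ 2) τ (s, a) fun u hu => ?_).trans ?_
  · simp [transitionNoise, Function.update_of_ne hu.ne',
      Function.update_of_ne (by omega : u + 1 ≠ t)]
  · simp [sumSqIncrements, transitionNoise]

lemma transitionNoise_self (τ : ℕ → S × A) : transitionNoise T P ν β p r T τ = 0 := by
  simp [transitionNoise, Vpol_of_lt T P ν β p r (Nat.lt_succ_self T)]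

variable (hc : ∀ t, IsBddMeasurable fun q : S × A => regReward β p r t q.1 q.2)
include hc

lemma isBddMeasurable_tailReturn (t : ℕ) : IsBddMeasurable (tailReturn T β p r t) :=
  .sum _ fun u _ => (hc u).comp (measurable_pi_apply u)

variable [IsFiniteMeasure ν] [∀ t, IsMarkovKernel (P t)] (hp : IsPolicyDensity ν p)
include hp

lemma isBddMeasurable_transitionNoise (t : ℕ) :
    IsBddMeasurable (transitionNoise T P ν β p r t) :=
  ((isBddMeasurable_Vpol hp hc (t + 1)).comp (by fun_prop)).sub
    ((isBddMeasurable_integral_Vpol hp hc t).comp (measurable_pi_apply t))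

lemma isBddMeasurable_sumSqIncrements (t : ℕ) :
    IsBddMeasurable (sumSqIncrements T P ν β p r t) :=
  .sum _ fun u _ => (((isBddMeasurable_Apol hp hc u).comp (measurable_pi_apply u)).pow 2).add
    ((isBddMeasurable_transitionNoise hc hp u).pow 2)

lemma integral_sumSqIncrements (μ : Measure (ℕ → S × A)) [IsFiniteMeasure μ] (t : ℕ) :
    ∫ τ, sumSqIncrements T P ν β p r t τ ∂μ
      = ∑ u ∈ Finset.Icc t T, (∫ τ, Apol T P ν β p r u (τ u).1 (τ u).2 ^ 2 ∂μ
        + ∫ τ, transitionNoise T P ν β p r u τ ^ 2 ∂μ) := by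
  have hA (u : ℕ) : IsBddMeasurable fun τ : ℕ → S × A => Apol T P ν β p r u (τ u).1 (τ u).2 ^ 2 :=
    ((isBddMeasurable_Apol hp hc u).comp (measurable_pi_apply u)).pow 2
  have hN (u : ℕ) := (isBddMeasurable_transitionNoise (T := T) (P := P) hc hp u).pow 2
  simp_rw [sumSqIncrements]
  rw [integral_finsetSum _ fun u _ => ((hA u).add (hN u)).integrable μ]
  exact Finset.sum_congr rfl fun u _ => integral_add ((hA u).integrable μ) ((hN u).integrable μ)

end Increments

section Variance

variable {S A : Type*} [MeasurableSpace S] [MeasurableSpace A] [Nonempty S] [Nonempty A]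
  {T : ℕ} {P : ℕ → Kernel (S × A) S} [∀ t, IsMarkovKernel (P t)] {ν : Measure A}
  [IsFiniteMeasure ν] {β : ℝ} {p r : ℕ → S → A → ℝ}
  (hc : ∀ t, IsBddMeasurable fun q : S × A => regReward β p r t q.1 q.2)
  (hp : IsPolicyDensity ν p)
include hc hp

lemma integral_Vpol_comp_state (t : ℕ) {φ : ℝ → ℝ} (hφ : Measurable φ) (s : S) :
    ∫ τ, φ (Vpol T P ν β p r t (τ t).1) ∂trajKernel T P (densKernel ν p) t s
      = φ (Vpol T P ν β p r t s) := by
  have := hp.isMarkovKernel_densKernel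
  by_cases ht : T < t
  · simp [Vpol_of_lt T P ν β p r ht]
  · exact integral_trajKernel_comp_state P _ (not_lt.1 ht)
      (hφ.comp (isBddMeasurable_Vpol hp hc t).1) s

lemma integral_sumSqIncrements_update {t : ℕ} (ht : t ≤ T) (s : S) (a : A) (s' : S) :
    ∫ τ, sumSqIncrements T P ν β p r t (Function.update τ t (s, a))
        ∂trajKernel T P (densKernel ν p) (t + 1) s'
      = Apol T P ν β p r t s a ^ 2 + (Vpol T P ν β p r (t + 1) s'
          - ∫ s', Vpol T P ν β p r (t + 1) s' ∂P t (s, a)) ^ 2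
        + ∫ τ, sumSqIncrements T P ν β p r (t + 1) τ
            ∂trajKernel T P (densKernel ν p) (t + 1) s' := by
  have := hp.isMarkovKernel_densKernel
  have hnoise : IsBddMeasurable fun τ : ℕ → S × A => (Vpol T P ν β p r (t + 1) (τ (t + 1)).1
      - ∫ s', Vpol T P ν β p r (t + 1) s' ∂P t (s, a)) ^ 2 :=
    ((isBddMeasurable_Vpol hp hc (t + 1)).comp
      (measurable_fst.comp (measurable_pi_apply (t + 1)))).sub (.const _) |>.pow 2
  simp_rw [sumSqIncrements_update ht]
  rw [integral_add (((IsBddMeasurable.const _).add hnoise).integrable _)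
      ((isBddMeasurable_sumSqIncrements hc hp (t + 1)).integrable _),
    integral_const_add _ (hnoise.integrable _),
    integral_Vpol_comp_state hc hp (t + 1) ((measurable_id'.sub_const _).pow_const 2)]

theorem integral_tailReturn (t : ℕ) (s : S) :
    ∫ τ, tailReturn T β p r t τ ∂trajKernel T P (densKernel ν p) t s
      = Vpol T P ν β p r t s := by
  have := hp.isMarkovKernel_densKernel
  by_cases ht : T < t
  · simp [tailReturn, Finset.Icc_eq_empty_of_lt ht, Vpol_of_lt T P ν β p r ht]
  replace ht := not_lt.1 ht
  rw [integral_trajKernel_of_le P _ ht (isBddMeasurable_tailReturn hc t), Vpol_of_le hp ht]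
  refine integral_congr_ae (ae_of_all _ fun a => ?_)
  have hinner (s' : S) : ∫ τ, tailReturn T β p r t (Function.update τ t (s, a))
      ∂trajKernel T P (densKernel ν p) (t + 1) s'
        = regReward β p r t s a + Vpol T P ν β p r (t + 1) s' := by
    simp_rw [tailReturn_update ht]
    rw [integral_const_add _ ((isBddMeasurable_tailReturn hc (t + 1)).integrable _),
      integral_tailReturn (t + 1) s']
  simp_rw [hinner]
  exact integral_const_add _ ((isBddMeasurable_Vpol hp hc (t + 1)).integrable _)
termination_by T + 1 - t
decreasing_by omega

theorem integral_sq_tailReturn_sub_Vpol (t : ℕ) (s : S) :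
    ∫ τ, (tailReturn T β p r t τ - Vpol T P ν β p r t s) ^ 2
        ∂trajKernel T P (densKernel ν p) t s
      = ∫ τ, sumSqIncrements T P ν β p r t τ ∂trajKernel T P (densKernel ν p) t s := by
  have := hp.isMarkovKernel_densKernel
  by_cases ht : T < t
  · simp [tailReturn, sumSqIncrements, Finset.Icc_eq_empty_of_lt ht, Vpol_of_lt T P ν β p r ht]
  replace ht := not_lt.1 ht
  have hV := isBddMeasurable_Vpol (T := T) (P := P) hp hc (t + 1)
  rw [integral_trajKernel_of_le P _ ht (((isBddMeasurable_tailReturn hc t).sub (.const _)).pow 2),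
    integral_trajKernel_of_le P _ ht (isBddMeasurable_sumSqIncrements hc hp t)]
  refine integral_congr_ae (ae_of_all _ fun a => ?_)
  set Q := fun s' => ∫ τ, sumSqIncrements T P ν β p r (t + 1) τ
    ∂trajKernel T P (densKernel ν p) (t + 1) s'
  have hQ : IsBddMeasurable Q :=
    (isBddMeasurable_sumSqIncrements hc hp (t + 1)).integral_kernel _
  have hleft (s' : S) : ∫ τ, (tailReturn T β p r t (Function.update τ t (s, a))
        - Vpol T P ν β p r t s) ^ 2 ∂trajKernel T P (densKernel ν p) (t + 1) s'
      = (Vpol T P ν β p r (t + 1) s' - (Vpol T P ν β p r t s - regReward β p r t s a)) ^ 2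
        + Q s' := by
    simp_rw [tailReturn_update ht]
    calc _ = ∫ τ, (tailReturn T β p r (t + 1) τ
          - (Vpol T P ν β p r t s - regReward β p r t s a)) ^ 2
            ∂trajKernel T P (densKernel ν p) (t + 1) s' := by
          congr 1
          ext τ
          ring
      _ = _ := by
          rw [integral_sub_sq_eq_add ((isBddMeasurable_tailReturn hc (t + 1)).memLp 2 _)
            (integral_tailReturn hc hp (t + 1) s'), integral_sq_tailReturn_sub_Vpol (t + 1) s']
  simp_rw [hleft, integral_sumSqIncrements_update hc hp ht]
  rw [integral_add ((hV.sub (.const _)).pow 2 |>.integrable _) (hQ.integrable _),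
    integral_add ((IsBddMeasurable.const _).add ((hV.sub (.const _)).pow 2) |>.integrable _)
      (hQ.integrable _),
    integral_sub_sq_eq_add (hV.memLp 2 _) rfl, integral_const_add _
      ((hV.sub (.const _)).pow 2 |>.integrable _), Apol_eq]
  ring
termination_by T + 1 - t
decreasing_by omega

theorem IsTrajLaw.variance_tailReturn {P0 : Measure S} [IsFiniteMeasure P0]
    {μ : Measure (ℕ → S × A)} (hμ : IsTrajLaw T P P0 (densKernel ν p) μ) :
    variance (tailReturn T β p r 1) μ
      = ∫ τ, (Vpol T P ν β p r 1 (τ 1).1 - ∫ s, Vpol T P ν β p r 1 s ∂P0) ^ 2 ∂μ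
        + ∫ τ, sumSqIncrements T P ν β p r 1 τ ∂μ := by
  have := hp.isMarkovKernel_densKernel
  have := hμ.1
  set J := ∫ s, Vpol T P ν β p r 1 s ∂P0
  have hR := isBddMeasurable_tailReturn (T := T) hc 1
  have hSq := isBddMeasurable_sumSqIncrements (T := T) (P := P) hc hp 1
  have hV₀ : IsBddMeasurable fun τ : ℕ → S × A => (Vpol T P ν β p r 1 (τ 1).1 - J) ^ 2 :=
    ((isBddMeasurable_Vpol hp hc 1).comp (measurable_fst.comp (measurable_pi_apply 1))).sub
      (.const _) |>.pow 2
  have hQ₀ := hV₀.integral_kernel (trajKernel T P (densKernel ν p) 1)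
  have hQ := hSq.integral_kernel (trajKernel T P (densKernel ν p) 1)
  have hmean : ∫ τ, tailReturn T β p r 1 τ ∂μ = J := by
    rw [hμ.integral_eq hR]
    exact integral_congr_ae (ae_of_all _ (integral_tailReturn hc hp 1))
  rw [variance_eq_integral hR.1.aemeasurable, hmean, hμ.integral_eq ((hR.sub (.const _)).pow 2),
    hμ.integral_eq hV₀, hμ.integral_eq hSq, ← integral_add (hQ₀.integrable _) (hQ.integrable _)]
  refine integral_congr_ae (ae_of_all _ fun s => ?_)
  dsimp only
  rw [integral_sub_sq_eq_add (hR.memLp 2 _) (integral_tailReturn hc hp 1 s),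
    integral_sq_tailReturn_sub_Vpol hc hp 1 s,
    integral_Vpol_comp_state hc hp 1 ((measurable_id'.sub_const _).pow_const 2)]

end Variance

end IRL

open IRL in
theorem variance_return_decomposition_general
    {S A : Type*} [MeasurableSpace S] [MeasurableSpace A] [Nonempty S] [Nonempty A]
    (T : ℕ) (hT : 1 ≤ T)
    (P0 : Measure S) [IsProbabilityMeasure P0]
    (P : ℕ → Kernel (S × A) S) [∀ t, IsMarkovKernel (P t)]
    (ν : Measure A) [IsFiniteMeasure ν]
    (β : ℝ) (hβ : 0 ≤ β)
    (r : ℕ → S → A → ℝ) (hr : IRL.IsBddReward r)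
    (p : ℕ → S → A → ℝ) (hp : IRL.IsPolicyDensity ν p)
    (hlog : 0 < β → IRL.HasBddLogDensity p)
    (Ppi : Measure (ℕ → S × A)) (hPpi : IRL.IsTrajLaw T P P0 (IRL.densKernel ν p) Ppi)
    (G : (ℕ → S × A) → ℝ)
    (hG : G = fun τ => ∑ t ∈ Finset.Icc 1 T,
      (r t (τ t).1 (τ t).2 - β * Real.log (p t (τ t).1 (τ t).2)))
    (Y : ℕ → (ℕ → S × A) → ℝ)
    (hY : Y = fun t τ =>
      if t = 0 then IRL.Vpol T P ν β p r 1 (τ 1).1 - ∫ s, IRL.Vpol T P ν β p r 1 s ∂P0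
      else IRL.Vpol T P ν β p r (t + 1) (τ (t + 1)).1
        - ∫ s', IRL.Vpol T P ν β p r (t + 1) s' ∂(P t ((τ t).1, (τ t).2))) :
    variance G Ppi
      = (∑ t ∈ Finset.Icc 1 T,
          ∫ τ, (IRL.Apol T P ν β p r t (τ t).1 (τ t).2) ^ 2 ∂Ppi)
        + ∑ t ∈ Finset.range T, ∫ τ, (Y t τ) ^ 2 ∂Ppi := by
  have hc := hr.isBddMeasurable_regReward hp hβ hlog
  have := hp.isMarkovKernel_densKernel
  have := hPpi.1
  subst hG hY
  beta_reduce
  have hnoise : ∑ t ∈ Finset.Icc 1 T, ∫ τ, transitionNoise T P ν β p r t τ ^ 2 ∂Ppi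
      = ∑ t ∈ Finset.Ico 1 T, ∫ τ, transitionNoise T P ν β p r t τ ^ 2 ∂Ppi := by
    rw [← Finset.Ico_insert_right hT, Finset.sum_insert Finset.right_notMem_Ico]
    simp [transitionNoise_self]
  have hY : ∀ t ∈ Finset.Ico 1 T,
      ∫ τ, (if t = 0 then Vpol T P ν β p r 1 (τ 1).1 - ∫ s, Vpol T P ν β p r 1 s ∂P0
        else Vpol T P ν β p r (t + 1) (τ (t + 1)).1
          - ∫ s', Vpol T P ν β p r (t + 1) s' ∂(P t ((τ t).1, (τ t).2))) ^ 2 ∂Ppi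
      = ∫ τ, transitionNoise T P ν β p r t τ ^ 2 ∂Ppi := by
    intro t ht
    have ht0 : t ≠ 0 := by simp at ht; omega
    simp only [transitionNoise, ht0, ↓reduceIte]
  rw [show (fun τ => ∑ t ∈ Finset.Icc 1 T, (r t (τ t).1 (τ t).2
      - β * Real.log (p t (τ t).1 (τ t).2))) = tailReturn T β p r 1 from rfl,
    hPpi.variance_tailReturn hc hp, integral_sumSqIncrements hc hp, Finset.sum_add_distrib,
    hnoise, Finset.range_eq_Ico, Finset.sum_eq_sum_Ico_succ_bot hT, Finset.sum_congr rfl hY]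
  simp only [↓reduceIte]
  ring

/-- **Variance decomposition of the regularized return**
(Corollary `variance_return_decomp`). For `β ≥ 0`, a bounded measurable reward `r` and a
Markov policy `π` with `ν`-densities (bounded log-densities when `β > 0`), the variance of
the regularized return under `P^π` splits into an action-variance and a dynamics-variance
term. -/
theorem variance_return_decomposition
    {S A : Type*} [MeasurableSpace S] [MeasurableSpace A] [Nonempty S] [Nonempty A]
    (T : ℕ) (hT : 1 ≤ T)
    (P0 : Measure S) [IsProbabilityMeasure P0]
    (P : ℕ → Kernel (S × A) S) [∀ t, IsMarkovKernel (P t)]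
    (ν : Measure A) [IsFiniteMeasure ν] (hν : ν Set.univ ≠ 0)
    (β : ℝ) (hβ : 0 ≤ β)
    (r : ℕ → S → A → ℝ) (hr : IRL.IsBddReward r)
    (p : ℕ → S → A → ℝ) (hp : IRL.IsPolicyDensity ν p)
    (hlog : 0 < β → IRL.HasBddLogDensity p)
    (Ppi : Measure (ℕ → S × A)) (hPpi : IRL.IsTrajLaw T P P0 (IRL.densKernel ν p) Ppi)
    (G : (ℕ → S × A) → ℝ)
    (hG : G = fun τ => ∑ t ∈ Finset.Icc 1 T,
      (r t (τ t).1 (τ t).2 - β * Real.log (p t (τ t).1 (τ t).2)))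
    (Y : ℕ → (ℕ → S × A) → ℝ)
    (hY : Y = fun t τ =>
      if t = 0 then IRL.Vpol T P ν β p r 1 (τ 1).1 - ∫ s, IRL.Vpol T P ν β p r 1 s ∂P0
      else IRL.Vpol T P ν β p r (t + 1) (τ (t + 1)).1
        - ∫ s', IRL.Vpol T P ν β p r (t + 1) s' ∂(P t ((τ t).1, (τ t).2))) :
    variance G Ppi
      = (∑ t ∈ Finset.Icc 1 T,
          ∫ τ, (IRL.Apol T P ν β p r t (τ t).1 (τ t).2) ^ 2 ∂Ppi)
        + ∑ t ∈ Finset.range T, ∫ τ, (Y t τ) ^ 2 ∂Ppi :=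
  variance_return_decomposition_general T hT P0 P ν β hβ r hr p hp hlog Ppi hPpi G hG Y hY
end
end

section
/- Potential shaping preserves advantages (Proposition pot_shaping, part 1): Let β ≥ 0, let r, r′ be bounded measurable rewards, and let π be any Markov policy (with kernels admitting ν-densities with bounded measurable log-densities when β > 0). Then the following are equivalent: (i) A^π_{t,r}(s,a) = A^π_{t,r′}(s,a) for all t, s, a; (ii) the unregularized advantage of r − r′ vanishes identically, A^{π,0}_{t,r−r′} ≡ 0; (iii) r − r′ ∈ U, i.e. there exist bounded measurable ψ_1,…,ψ_T : S → ℝ with ψ_{T+1} := 0 such that r_t − r′_t = ψ_t − P_tψ_{t+1} for all t, where (P_tψ)(s,a) := ∫ ψ(s′) P_t(ds′|s,a) and (P_Tψ_{T+1}) := 0. -/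
open MeasureTheory ProbabilityTheory Real
open scoped ENNReal RealInnerProductSpace

noncomputable section

open MeasureTheory ProbabilityTheory Real
open scoped ENNReal

section AuxLemmas

open IRL

variable {S A : Type*} [MeasurableSpace S] [MeasurableSpace A]
variable {T : ℕ} {P : ℕ → Kernel (S × A) S} {ν : Measure A}

lemma Vpol_of_gt {β : ℝ} {p r : ℕ → S → A → ℝ} {t : ℕ} (h : T < t) (s : S) :
    Vpol T P ν β p r t s = 0 := by
  rw [Vpol]; simp [h]

lemma Vpol_of_le {β : ℝ} {p r : ℕ → S → A → ℝ} {t : ℕ} (h : t ≤ T) (s : S) :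
    Vpol T P ν β p r t s
      = ∫ a, (r t s a + (∫ s', Vpol T P ν β p r (t + 1) s' ∂(P t (s, a)))
          - β * Real.log (p t s a)) * p t s a ∂ν := by
  rw [Vpol]; simp [Nat.not_lt.mpr h]

lemma integrable_of_bdd' {X : Type*} [MeasurableSpace X] {μ : Measure X} [IsFiniteMeasure μ]
    {f : X → ℝ} (hf : AEStronglyMeasurable f μ) {C : ℝ} (hC : ∀ x, |f x| ≤ C) :
    Integrable f μ :=
  (integrable_const C).mono' hf (Filter.Eventually.of_forall fun x => by
    simpa [Real.norm_eq_abs] using hC x)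

lemma integrable_density [IsFiniteMeasure ν] {p : ℕ → S → A → ℝ} (hp : IsPolicyDensity ν p)
    (t : ℕ) (s : S) : Integrable (fun a => p t s a) ν := by
  by_contra h
  have h2 := hp.2.2 t s
  rw [integral_undef h] at h2
  norm_num at h2

lemma meas_kernel_integral [∀ t, IsMarkovKernel (P t)] {g : S → ℝ} (hg : Measurable g) (t : ℕ) :
    Measurable fun q : S × A => ∫ s', g s' ∂(P t q) := by
  have h : StronglyMeasurable fun q : (S × A) × S => g q.2 :=
    (hg.comp measurable_snd).stronglyMeasurable
  exact h.integral_kernel_prod_right'.measurable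

lemma abs_kernel_integral_le [∀ t, IsMarkovKernel (P t)] {g : S → ℝ} {C : ℝ}
    (hC : ∀ s, |g s| ≤ C) (t : ℕ) (q : S × A) :
    |∫ s', g s' ∂(P t q)| ≤ C := by
  have h := norm_integral_le_of_norm_le_const (μ := P t q) (f := g)
    (Filter.Eventually.of_forall fun s => by simpa [Real.norm_eq_abs] using hC s)
  simpa [Real.norm_eq_abs, measure_univ] using h

lemma kernel_integral_sub [∀ t, IsMarkovKernel (P t)] {g h : S → ℝ}
    (hg : Measurable g) {Cg : ℝ} (hCg : ∀ s, |g s| ≤ Cg)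
    (hh : Measurable h) {Ch : ℝ} (hCh : ∀ s, |h s| ≤ Ch) (t : ℕ) (q : S × A) :
    ∫ s', (g s' - h s') ∂(P t q) = (∫ s', g s' ∂(P t q)) - ∫ s', h s' ∂(P t q) :=
  integral_sub (integrable_of_bdd' hg.aestronglyMeasurable hCg)
    (integrable_of_bdd' hh.aestronglyMeasurable hCh)

lemma vpol_meas_bdd [∀ t, IsMarkovKernel (P t)] [IsFiniteMeasure ν]
    (β : ℝ) {r p : ℕ → S → A → ℝ} (hr : IsBddReward r) (hp : IsPolicyDensity ν p)
    (hbl : ∀ t, ∃ C, ∀ s a, |β * Real.log (p t s a)| ≤ C) (t : ℕ) :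
    Measurable (Vpol T P ν β p r t) ∧ ∃ C, ∀ s, |Vpol T P ν β p r t s| ≤ C := by
  suffices h : ∀ k t, T + 1 - t ≤ k →
      Measurable (Vpol T P ν β p r t) ∧ ∃ C, ∀ s, |Vpol T P ν β p r t s| ≤ C from
    h (T + 1) t (by omega)
  intro k
  induction k with
  | zero =>
    intro t ht
    have hTt : T < t := by omega
    have hfun : Vpol T P ν β p r t = fun _ => (0 : ℝ) := funext fun s => Vpol_of_gt hTt s
    exact ⟨hfun ▸ measurable_const, 0, fun s => by rw [hfun]; simp⟩
  | succ k ih =>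
    intro t ht
    by_cases hTt : T < t
    · have hfun : Vpol T P ν β p r t = fun _ => (0 : ℝ) := funext fun s => Vpol_of_gt hTt s
      exact ⟨hfun ▸ measurable_const, 0, fun s => by rw [hfun]; simp⟩
    · have htT : t ≤ T := Nat.not_lt.mp hTt
      obtain ⟨hV1, C1, hC1⟩ := ih (t + 1) (by omega)
      obtain ⟨hrm, Cr, hCr⟩ := hr t
      obtain ⟨Cl, hCl⟩ := hbl t
      set C1' := max C1 0 with hC1'def
      set Cr' := max Cr 0 with hCr'def
      set Cl' := max Cl 0 with hCl'def
      have hC1' : ∀ s, |Vpol T P ν β p r (t + 1) s| ≤ C1' :=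
        fun s => (hC1 s).trans (le_max_left _ _)
      have hCr' : ∀ s a, |r t s a| ≤ Cr' := fun s a => (hCr s a).trans (le_max_left _ _)
      have hCl' : ∀ s a, |β * Real.log (p t s a)| ≤ Cl' :=
        fun s a => (hCl s a).trans (le_max_left _ _)
      set g : S × A → ℝ := fun q => ∫ s', Vpol T P ν β p r (t + 1) s' ∂(P t q) with hgdef
      have hg : Measurable g := meas_kernel_integral hV1 t
      have hgb : ∀ q, |g q| ≤ C1' := fun q => abs_kernel_integral_le hC1' t q
      set F : S × A → ℝ :=
        fun q => (r t q.1 q.2 + g q - β * Real.log (p t q.1 q.2)) * p t q.1 q.2 with hFdef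
      have hF : Measurable F :=
        (((hrm.add hg).sub (measurable_const.mul (Real.measurable_log.comp (hp.1 t)))).mul
          (hp.1 t))
      have hVfun : Vpol T P ν β p r t = fun s => ∫ a, F (s, a) ∂ν :=
        funext fun s => Vpol_of_le htT s
      have hVt : Measurable (Vpol T P ν β p r t) := by
        have h1 : StronglyMeasurable fun s => ∫ a, F (s, a) ∂((Kernel.const S ν) s) :=
          hF.stronglyMeasurable.integral_kernel_prod_right'
        rw [hVfun]
        simpa [Kernel.const_apply] using h1.measurable
      refine ⟨hVt, Cr' + C1' + Cl', fun s => ?_⟩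
      rw [hVfun]
      have habs : ∀ a, |F (s, a)| ≤ (Cr' + C1' + Cl') * p t s a := by
        intro a
        have hpa := hp.2.1 t s a
        rw [hFdef]
        simp only
        rw [abs_mul, abs_of_nonneg hpa]
        refine mul_le_mul_of_nonneg_right ?_ hpa
        calc |r t s a + g (s, a) - β * Real.log (p t s a)|
            ≤ |r t s a| + |g (s, a)| + |β * Real.log (p t s a)| := by
              rw [sub_eq_add_neg, ← abs_neg (β * Real.log (p t s a))]
              exact abs_add_three _ _ _
          _ ≤ Cr' + C1' + Cl' := by
              gcongr
              · exact hCr' s a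
              · exact hgb (s, a)
              · exact hCl' s a
      calc |∫ a, F (s, a) ∂ν| ≤ ∫ a, |F (s, a)| ∂ν := by
            simpa [Real.norm_eq_abs] using norm_integral_le_integral_norm (fun a => F (s, a))
        _ ≤ ∫ a, (Cr' + C1' + Cl') * p t s a ∂ν := by
            refine integral_mono_of_nonneg (Filter.Eventually.of_forall fun a => abs_nonneg _)
              ((integrable_density hp t s).const_mul _)
              (Filter.Eventually.of_forall fun a => habs a)
        _ = Cr' + C1' + Cl' := by rw [integral_const_mul, hp.2.2 t s, mul_one]

lemma isBddReward_sub {r r' : ℕ → S → A → ℝ} (hr : IsBddReward r) (hr' : IsBddReward r') :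
    IsBddReward (fun u x b => r u x b - r' u x b) := by
  intro t
  obtain ⟨hm, C, hC⟩ := hr t
  obtain ⟨hm', C', hC'⟩ := hr' t
  refine ⟨hm.sub hm', C + C', fun s a => ?_⟩
  calc |r t s a - r' t s a| ≤ |r t s a| + |r' t s a| := abs_sub _ _
    _ ≤ C + C' := add_le_add (hC s a) (hC' s a)

lemma hbl_zero (p : ℕ → S → A → ℝ) :
    ∀ t, ∃ C, ∀ (s : S) (a : A), |(0 : ℝ) * Real.log (p t s a)| ≤ C :=
  fun _ => ⟨0, fun _ _ => by simp⟩

lemma vpol_sub [∀ t, IsMarkovKernel (P t)] [IsFiniteMeasure ν]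
    (β : ℝ) {r r' p : ℕ → S → A → ℝ} (hr : IsBddReward r) (hr' : IsBddReward r')
    (hp : IsPolicyDensity ν p)
    (hbl : ∀ t, ∃ C, ∀ s a, |β * Real.log (p t s a)| ≤ C) :
    ∀ t s, Vpol T P ν β p r t s - Vpol T P ν β p r' t s
      = Vpol T P ν 0 p (fun u x b => r u x b - r' u x b) t s := by
  set d : ℕ → S → A → ℝ := fun u x b => r u x b - r' u x b with hddef
  have hd : IsBddReward d := isBddReward_sub hr hr'
  suffices h : ∀ k t, T + 1 - t ≤ k → ∀ s,
      Vpol T P ν β p r t s - Vpol T P ν β p r' t s = Vpol T P ν 0 p d t s from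
    fun t s => h (T + 1) t (by omega) s
  intro k
  induction k with
  | zero =>
    intro t ht s
    have hTt : T < t := by omega
    rw [Vpol_of_gt hTt, Vpol_of_gt hTt, Vpol_of_gt hTt]; ring
  | succ k ih =>
    intro t ht s
    by_cases hTt : T < t
    · rw [Vpol_of_gt hTt, Vpol_of_gt hTt, Vpol_of_gt hTt]; ring
    · have htT : t ≤ T := Nat.not_lt.mp hTt
      have ih1 : ∀ s', Vpol T P ν β p r (t + 1) s' - Vpol T P ν β p r' (t + 1) s'
          = Vpol T P ν 0 p d (t + 1) s' := fun s' => ih (t + 1) (by omega) s'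
      obtain ⟨hVr, Cr1, hCr1⟩ := vpol_meas_bdd (T := T) (P := P) (ν := ν) β hr hp hbl (t + 1)
      obtain ⟨hVr', Cr1', hCr1'⟩ := vpol_meas_bdd (T := T) (P := P) (ν := ν) β hr' hp hbl (t + 1)
      rw [Vpol_of_le htT, Vpol_of_le htT, Vpol_of_le htT]
      -- integrability of both integrands
      have hint : ∀ (rr : ℕ → S → A → ℝ), IsBddReward rr →
          Measurable (Vpol T P ν β p rr (t + 1)) →
          (∃ C, ∀ s', |Vpol T P ν β p rr (t + 1) s'| ≤ C) →
          Integrable (fun a => (rr t s a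
            + (∫ s', Vpol T P ν β p rr (t + 1) s' ∂(P t (s, a)))
            - β * Real.log (p t s a)) * p t s a) ν := by
        intro rr hrr hV ⟨C1, hC1⟩
        obtain ⟨hrm, Cr, hCr⟩ := hrr t
        obtain ⟨Cl, hCl⟩ := hbl t
        refine (integrable_density hp t s).bdd_mul
          (c := |Cr| + |C1| + |Cl|) ?_ (Filter.Eventually.of_forall fun a => ?_)
        · have hgm : Measurable fun a : A =>
              ∫ s', Vpol T P ν β p rr (t + 1) s' ∂(P t (s, a)) :=
            (meas_kernel_integral hV t).comp (measurable_prodMk_left)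
          have hrm' : Measurable fun a : A => rr t s a := hrm.comp measurable_prodMk_left
          have hlm : Measurable fun a : A => β * Real.log (p t s a) :=
            measurable_const.mul (Real.measurable_log.comp ((hp.1 t).comp
              measurable_prodMk_left))
          exact ((hrm'.add hgm).sub hlm).aestronglyMeasurable
        · rw [Real.norm_eq_abs]
          calc |rr t s a + (∫ s', Vpol T P ν β p rr (t + 1) s' ∂(P t (s, a)))
                - β * Real.log (p t s a)|
              ≤ |rr t s a| + |∫ s', Vpol T P ν β p rr (t + 1) s' ∂(P t (s, a))|
                + |β * Real.log (p t s a)| := by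
                rw [sub_eq_add_neg, ← abs_neg (β * Real.log (p t s a))]
                exact abs_add_three _ _ _
            _ ≤ |Cr| + |C1| + |Cl| :=
                add_le_add (add_le_add ((hCr s a).trans (le_abs_self _))
                  ((abs_kernel_integral_le hC1 t (s, a)).trans (le_abs_self _)))
                  ((hCl s a).trans (le_abs_self _))
      rw [← integral_sub (hint r hr hVr ⟨Cr1, hCr1⟩) (hint r' hr' hVr' ⟨Cr1', hCr1'⟩)]
      refine integral_congr_ae (Filter.Eventually.of_forall fun a => ?_)
      have key : (∫ s', Vpol T P ν β p r (t + 1) s' ∂(P t (s, a)))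
          - (∫ s', Vpol T P ν β p r' (t + 1) s' ∂(P t (s, a)))
          = ∫ s', Vpol T P ν 0 p d (t + 1) s' ∂(P t (s, a)) := by
        rw [← kernel_integral_sub hVr hCr1 hVr' hCr1' t (s, a)]
        exact integral_congr_ae (Filter.Eventually.of_forall fun s' => ih1 s')
      simp only [hddef]
      rw [← key]
      ring

lemma apol_sub [∀ t, IsMarkovKernel (P t)] [IsFiniteMeasure ν]
    (β : ℝ) {r r' p : ℕ → S → A → ℝ} (hr : IsBddReward r) (hr' : IsBddReward r')
    (hp : IsPolicyDensity ν p)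
    (hbl : ∀ t, ∃ C, ∀ s a, |β * Real.log (p t s a)| ≤ C) (t : ℕ) (s : S) (a : A) :
    Apol T P ν β p r t s a - Apol T P ν β p r' t s a
      = Apol T P ν 0 p (fun u x b => r u x b - r' u x b) t s a := by
  set d : ℕ → S → A → ℝ := fun u x b => r u x b - r' u x b with hddef
  obtain ⟨hVr, Cr1, hCr1⟩ := vpol_meas_bdd (T := T) (P := P) (ν := ν) β hr hp hbl (t + 1)
  obtain ⟨hVr', Cr1', hCr1'⟩ := vpol_meas_bdd (T := T) (P := P) (ν := ν) β hr' hp hbl (t + 1)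
  have hsub := vpol_sub (T := T) (P := P) (ν := ν) β hr hr' hp hbl
  have key : (∫ s', Vpol T P ν β p r (t + 1) s' ∂(P t (s, a)))
      - (∫ s', Vpol T P ν β p r' (t + 1) s' ∂(P t (s, a)))
      = ∫ s', Vpol T P ν 0 p d (t + 1) s' ∂(P t (s, a)) := by
    rw [← kernel_integral_sub hVr hCr1 hVr' hCr1' t (s, a)]
    exact integral_congr_ae (Filter.Eventually.of_forall fun s' => hsub (t + 1) s')
  have key2 := hsub t s
  unfold Apol Qpol
  simp only [hddef] at key key2 ⊢
  linarith

lemma vpol_eq_psi [∀ t, IsMarkovKernel (P t)] [IsFiniteMeasure ν]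
    {d p : ℕ → S → A → ℝ} (hp : IsPolicyDensity ν p)
    {ψ : ℕ → S → ℝ} (hψT : ψ (T + 1) = 0)
    (heq : ∀ t, 1 ≤ t → t ≤ T → ∀ s a,
      d t s a = ψ t s - ∫ s', ψ (t + 1) s' ∂(P t (s, a))) :
    ∀ t, 1 ≤ t → t ≤ T + 1 → ∀ s, Vpol T P ν 0 p d t s = ψ t s := by
  suffices h : ∀ k t, T + 1 - t ≤ k → 1 ≤ t → t ≤ T + 1 → ∀ s,
      Vpol T P ν 0 p d t s = ψ t s from fun t h1 h2 s => h (T + 1) t (by omega) h1 h2 s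
  intro k
  induction k with
  | zero =>
    intro t ht h1 h2 s
    have htE : t = T + 1 := by omega
    subst htE
    rw [Vpol_of_gt (by omega), hψT]
    simp
  | succ k ih =>
    intro t ht h1 h2 s
    by_cases hTt : T < t
    · have htE : t = T + 1 := by omega
      subst htE
      rw [Vpol_of_gt (by omega), hψT]
      simp
    · have htT : t ≤ T := Nat.not_lt.mp hTt
      rw [Vpol_of_le htT]
      have hpt : ∀ a, (d t s a + (∫ s', Vpol T P ν 0 p d (t + 1) s' ∂(P t (s, a)))
          - (0 : ℝ) * Real.log (p t s a)) * p t s a = ψ t s * p t s a := by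
        intro a
        have h1' : (∫ s', Vpol T P ν 0 p d (t + 1) s' ∂(P t (s, a)))
            = ∫ s', ψ (t + 1) s' ∂(P t (s, a)) :=
          integral_congr_ae (Filter.Eventually.of_forall fun s' =>
            ih (t + 1) (by omega) (by omega) (by omega) s')
        rw [h1', heq t h1 htT s a]
        ring
      rw [integral_congr_ae (Filter.Eventually.of_forall hpt), integral_const_mul,
        hp.2.2 t s, mul_one]

end AuxLemmas

/-- **Potential shaping preserves advantages** (Proposition `pot_shaping`, part 1).
For `β ≥ 0`, bounded measurable rewards `r, r′` and any Markov policy `π` with `ν`-densities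
(bounded log-densities when `β > 0`), the following are equivalent: (i) the regularized
advantages of `r` and `r′` coincide; (ii) the unregularized advantage of `r − r′` vanishes
identically; (iii) `r − r′` is a potential-shaping transformation. -/
theorem potential_shaping_preserves_advantages
    {S A : Type*} [MeasurableSpace S] [MeasurableSpace A]
    (T : ℕ) (hT : 1 ≤ T)
    (P0 : Measure S) [IsProbabilityMeasure P0]
    (P : ℕ → Kernel (S × A) S) [∀ t, IsMarkovKernel (P t)]
    (ν : Measure A) [IsFiniteMeasure ν] (hν : ν Set.univ ≠ 0)
    (β : ℝ) (hβ : 0 ≤ β)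
    (r r' : ℕ → S → A → ℝ) (hr : IRL.IsBddReward r) (hr' : IRL.IsBddReward r')
    (p : ℕ → S → A → ℝ) (hp : IRL.IsPolicyDensity ν p)
    (hlog : 0 < β → IRL.HasBddLogDensity p) :
    -- (i) ↔ (ii)
    ((∀ t, 1 ≤ t → t ≤ T → ∀ s a,
        IRL.Apol T P ν β p r t s a = IRL.Apol T P ν β p r' t s a)
      ↔ (∀ t, 1 ≤ t → t ≤ T → ∀ s a,
        IRL.Apol T P ν 0 p (fun t' s' a' => r t' s' a' - r' t' s' a') t s a = 0)) ∧
    -- (ii) ↔ (iii)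
    ((∀ t, 1 ≤ t → t ≤ T → ∀ s a,
        IRL.Apol T P ν 0 p (fun t' s' a' => r t' s' a' - r' t' s' a') t s a = 0)
      ↔ (∃ ψ : ℕ → S → ℝ,
          (∀ t, Measurable (ψ t) ∧ ∃ C, ∀ s, |ψ t s| ≤ C) ∧
          ψ (T + 1) = 0 ∧
          ∀ t, 1 ≤ t → t ≤ T → ∀ s a,
            r t s a - r' t s a = ψ t s - ∫ s', ψ (t + 1) s' ∂(P t (s, a)))) := by
  set d : ℕ → S → A → ℝ := fun t' s' a' => r t' s' a' - r' t' s' a' with hddef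
  have hd : IRL.IsBddReward d := isBddReward_sub hr hr'
  have hbl : ∀ t, ∃ C, ∀ s a, |β * Real.log (p t s a)| ≤ C := by
    rcases eq_or_lt_of_le hβ with hb0 | hb0
    · exact fun t => ⟨0, fun s a => by rw [← hb0]; simp⟩
    · intro t
      obtain ⟨_, C, hC⟩ := hlog hb0 t
      exact ⟨β * C, fun s a => by
        rw [abs_mul, abs_of_nonneg hβ]
        exact mul_le_mul_of_nonneg_left (hC s a) hβ⟩
  constructor
  · constructor
    · intro h t h1 h2 s a
      have h3 := apol_sub (T := T) (P := P) (ν := ν) β hr hr' hp hbl t s a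
      rw [h t h1 h2 s a, sub_self] at h3
      exact h3.symm
    · intro h t h1 h2 s a
      have h3 := apol_sub (T := T) (P := P) (ν := ν) β hr hr' hp hbl t s a
      rw [h t h1 h2 s a] at h3
      exact sub_eq_zero.mp h3
  · constructor
    · intro h
      refine ⟨fun t => IRL.Vpol T P ν 0 p d t, fun t => ?_, ?_, fun t h1 h2 s a => ?_⟩
      · obtain ⟨hm, C, hC⟩ := vpol_meas_bdd (T := T) (P := P) (ν := ν) 0 hd hp (hbl_zero p) t
        exact ⟨hm, C, hC⟩
      · exact funext fun s => Vpol_of_gt (by omega) s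
      · have h0 := h t h1 h2 s a
        simp only [IRL.Apol, IRL.Qpol, zero_mul, sub_zero] at h0
        have : r t s a - r' t s a = d t s a := by rw [hddef]
        rw [this]
        linarith
    · rintro ⟨ψ, hψmb, hψT, heq⟩ t h1 h2 s a
      have heq' : ∀ t, 1 ≤ t → t ≤ T → ∀ s a,
          d t s a = ψ t s - ∫ s', ψ (t + 1) s' ∂(P t (s, a)) := by
        intro t h1 h2 s a
        rw [hddef]
        exact heq t h1 h2 s a
      have hVψ := vpol_eq_psi (T := T) (P := P) (ν := ν) hp hψT heq'
      have hkey : (∫ s', IRL.Vpol T P ν 0 p d (t + 1) s' ∂(P t (s, a)))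
          = ∫ s', ψ (t + 1) s' ∂(P t (s, a)) :=
        integral_congr_ae (Filter.Eventually.of_forall fun s' =>
          hVψ (t + 1) (by omega) (by omega) s')
      have hVt : IRL.Vpol T P ν 0 p d t s = ψ t s := hVψ t h1 (by omega) s
      simp only [IRL.Apol, IRL.Qpol, zero_mul, sub_zero]
      rw [hkey, hVt]
      have hd0 : d t s a = ψ t s - ∫ s', ψ (t + 1) s' ∂(P t (s, a)) := heq' t h1 h2 s a
      linarith
end
end
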